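/- For every n ≥ 1, the Sackin index of the binary echelon tree satisfies S(T^be_n) = Σ_{i=1}^{w(n)-1} ( f_n(i+1) + f_n(i)·(w(n)-i) ) + Σ_{i=1}^{w(n)} f_n(i)·log₂(f_n(i)), where w(n) is the binary weight of n and f_n(1) < ... < f_n(w(n)) are the powers of two in the binary expansion of n. -/

import Mathlib

/-- Rooted binary trees: a leaf, or an internal vertex with two child subtrees. -/
inductive BTree where
  | leaf : BTree
  | node : BTree → BTree → BTree
deriving DecidableEq

namespace BTree

/-- Number of leaves of a rooted binary tree. -/
def numLeaves : BTree → ℕ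
  | leaf => 1
  | node l r => numLeaves l + numLeaves r

/-- Sackin index: sum over internal vertices `v` of `n_{v_a} + n_{v_b}`. -/
def sackin : BTree → ℕ
  | leaf => 0
  | node l r => sackin l + sackin r + (numLeaves l + numLeaves r)

/-- Colless index: sum over internal vertices `v` of `|n_{v_a} - n_{v_b}|`. -/
def colless : BTree → ℕ
  | leaf => 0
  | node l r =>
      colless l + colless r +
        (max (numLeaves l) (numLeaves r) - min (numLeaves l) (numLeaves r))

/-- `N_a`: sum over internal vertices of the larger child-subtree leaf count. -/
def Na : BTree → ℕ
  | leaf => 0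
  | node l r => Na l + Na r + max (numLeaves l) (numLeaves r)

/-- `N_b`: sum over internal vertices of the smaller child-subtree leaf count. -/
def Nb : BTree → ℕ
  | leaf => 0
  | node l r => Nb l + Nb r + min (numLeaves l) (numLeaves r)

/-- `Δ_CS = C - S`, as an integer. -/
def deltaCS (T : BTree) : ℤ := (colless T : ℤ) - (sackin T : ℤ)

/-- Caterpillar trees: every internal vertex has at least one leaf child. -/
def isCaterpillar : BTree → Prop
  | leaf => True
  | node l r => (l = leaf ∧ isCaterpillar r) ∨ (r = leaf ∧ isCaterpillar l)

/-- The fully balanced tree of height `h`. -/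
def fbTree : ℕ → BTree
  | 0 => leaf
  | h + 1 => node (fbTree h) (fbTree h)

end BTree

namespace BTree

/-- The binary echelon tree `T^be_n`: for `n > 1` with `k = ⌈log₂ n⌉`,
`T^be_n = (T^fb_{k-1}, T^be_{n - 2^{k-1}})`. -/
def beTree : ℕ → BTree
  | 0 => leaf
  | 1 => leaf
  | n + 2 =>
      node (fbTree (Nat.clog 2 (n + 2) - 1))
        (beTree ((n + 2) - 2 ^ (Nat.clog 2 (n + 2) - 1)))
decreasing_by
  have : 0 < 2 ^ (Nat.clog 2 (n + 2) - 1) := pow_pos (by norm_num) _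
  omega

/-- The exponents of the powers of two in the binary expansion of `n`, in
increasing order; `f_n(i) = 2 ^ (expList n)[i-1]` and `w(n) = (expList n).length`. -/
def expList (n : ℕ) : List ℕ := (List.range (n + 1)).filter (fun i => n.testBit i)

end BTree



namespace BTree

lemma numLeaves_fbTree (h : ℕ) : numLeaves (fbTree h) = 2 ^ h := by
  induction h with
  | zero => rfl
  | succ h ih => simp [fbTree, numLeaves, ih, pow_succ]; ring

lemma sackin_fbTree (h : ℕ) : sackin (fbTree h) = h * 2 ^ h := by
  induction h with
  | zero => rfl
  | succ h ih =>
    simp [fbTree, sackin, ih, numLeaves_fbTree, pow_succ]; ring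

lemma beTree_eq (n : ℕ) (hn : 2 ≤ n) :
    beTree n = node (fbTree (Nat.clog 2 n - 1))
      (beTree (n - 2 ^ (Nat.clog 2 n - 1))) := by
  obtain ⟨m, rfl⟩ : ∃ m, n = m + 2 := ⟨n - 2, by omega⟩
  rw [beTree]

lemma clog_pow_two (e : ℕ) : Nat.clog 2 (2 ^ (e + 1)) = e + 1 := by
  have h1 : Nat.clog 2 (2 ^ (e + 1)) ≤ e + 1 :=
    (Nat.clog_le_iff_le_pow (by norm_num)).mpr le_rfl
  have h2 : ¬ (2 ^ (e + 1) ≤ 2 ^ e) := by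
    have := Nat.pow_lt_pow_succ (a := 2) (by norm_num) (n := e); omega
  have h3 : ¬ Nat.clog 2 (2 ^ (e + 1)) ≤ e := fun h => h2
    ((Nat.clog_le_iff_le_pow (by norm_num)).mp h)
  omega

lemma beTree_one : beTree 1 = leaf := by rw [beTree]

lemma beTree_pow (e : ℕ) : beTree (2 ^ e) = fbTree e := by
  induction e with
  | zero => rw [pow_zero, beTree_one]; rfl
  | succ e ih =>
    have h2 : 2 ≤ 2 ^ (e + 1) := by
      have : 2 ^ 1 ≤ 2 ^ (e + 1) := Nat.pow_le_pow_right (by norm_num) (by omega)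
      simpa using this
    rw [beTree_eq _ h2, clog_pow_two]
    have hsub : 2 ^ (e + 1) - 2 ^ (e + 1 - 1) = 2 ^ e := by
      simp [pow_succ]; omega
    rw [hsub]
    simp [fbTree, ih]

lemma numLeaves_beTree : ∀ n, 1 ≤ n → numLeaves (beTree n) = n := by
  intro n
  induction n using Nat.strong_induction_on with
  | _ n ih =>
    intro hn
    rcases Nat.lt_or_ge n 2 with h | h
    · interval_cases n; rw [beTree_one]; rfl
    · have hlt : 2 ^ (Nat.clog 2 n - 1) < n := by
        have := Nat.pow_pred_clog_lt_self (b := 2) (by norm_num) (x := n) (by omega)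
        simpa [Nat.pred_eq_sub_one] using this
      have hpos : 0 < 2 ^ (Nat.clog 2 n - 1) := Nat.pow_pos (by norm_num)
      rw [beTree_eq n h]
      simp only [numLeaves, numLeaves_fbTree]
      rw [ih _ (by omega) (by omega)]
      omega

lemma expList_zero : expList 0 = [] := by decide

lemma filter_range_congr {n M N : ℕ} (hMN : M ≤ N) (h : n < 2 ^ M) :
    (List.range N).filter (fun i => n.testBit i) =
      (List.range M).filter (fun i => n.testBit i) := by
  induction N with
  | zero => have : M = 0 := by omega
            subst this; rfl
  | succ N ih =>
    rcases Nat.le_succ_iff.mp hMN with h1 | h1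
    · rw [List.range_succ, List.filter_append, ih h1]
      have hb : n.testBit N = false := by
        apply Nat.testBit_lt_two_pow
        calc n < 2 ^ M := h
          _ ≤ 2 ^ N := Nat.pow_le_pow_right (by norm_num) h1
      simp [hb]
    · subst h1; rfl

lemma expList_eq_filter (n N : ℕ) (h : n < 2 ^ N) :
    expList n = (List.range N).filter (fun i => n.testBit i) := by
  rcases le_total (n + 1) N with h' | h'
  · rw [expList, ← filter_range_congr h' ((Nat.lt_two_pow_self (n := n)).trans_le (Nat.pow_le_pow_right (by norm_num) n.le_succ))]
  · rw [expList, filter_range_congr h' h]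

lemma expList_succ (n : ℕ) (hn : 1 ≤ n) :
    expList n = expList (n - 2 ^ Nat.log 2 n) ++ [Nat.log 2 n] := by
  set e := Nat.log 2 n with he
  set m := n - 2 ^ e with hm
  have h1 : 2 ^ e ≤ n := Nat.pow_log_le_self 2 (by omega)
  have h2 : n < 2 ^ (e + 1) := Nat.lt_pow_succ_log_self (by norm_num) n
  have hmlt : m < 2 ^ e := by
    have : 2 ^ (e + 1) = 2 ^ e + 2 ^ e := by ring
    omega
  have hn' : n = 2 ^ e + m := by omega
  rw [expList_eq_filter n (e + 1) h2, List.range_succ, List.filter_append]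
  congr 1
  · rw [expList_eq_filter m e hmlt]
    apply List.filter_congr
    intro i hi
    rw [List.mem_range] at hi
    rw [hn', Nat.testBit_two_pow_add_gt hi]
  · have : n.testBit e = true := by
      rw [hn', Nat.testBit_two_pow_add_eq, Nat.testBit_lt_two_pow hmlt]
      rfl
    simp [this]

/-- Power sum of a list of exponents, via `getD`. -/
def psum (L : List ℕ) : ℤ := ∑ i ∈ Finset.range L.length, (2 : ℤ) ^ (L.getD i 0)

/-- The RHS of the Sackin formula, as a function of the exponent list. -/
def F (L : List ℕ) : ℤ :=
  (∑ i ∈ Finset.range (L.length - 1),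
    ((2 : ℤ) ^ (L.getD (i + 1) 0) +
      (2 : ℤ) ^ (L.getD i 0) * ((L.length : ℤ) - (i + 1)))) +
  ∑ i ∈ Finset.range L.length,
    (2 : ℤ) ^ (L.getD i 0) * ((L.getD i 0 : ℕ) : ℤ)

lemma psum_append (L : List ℕ) (e : ℕ) : psum (L ++ [e]) = psum L + 2 ^ e := by
  unfold psum
  rw [List.length_append, List.length_singleton, Finset.sum_range_succ]
  congr 1
  · exact Finset.sum_congr rfl fun i hi => by
      rw [List.getD_append _ _ _ _ (Finset.mem_range.mp hi)]
  · rw [List.getD_append_right _ _ _ _ le_rfl]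
    simp

lemma F_append (L : List ℕ) (e : ℕ) (hL : L ≠ []) :
    F (L ++ [e]) = F L + psum L + 2 ^ e + 2 ^ e * e := by
  have hk : 1 ≤ L.length := List.length_pos_iff.mpr hL
  obtain ⟨k, hk'⟩ : ∃ k, L.length = k + 1 := ⟨L.length - 1, by omega⟩
  unfold F psum
  rw [List.length_append, List.length_singleton, hk']
  have hgetlast : ∀ i, i < k + 1 → (L ++ [e]).getD i 0 = L.getD i 0 := fun i hi =>
    List.getD_append _ _ _ _ (by omega)
  have hgete : (L ++ [e]).getD (k + 1) 0 = e := by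
    rw [List.getD_append_right _ _ _ _ (by omega)]
    simp [hk']
  -- second sums
  have hsnd : (∑ i ∈ Finset.range (k + 1 + 1),
      (2 : ℤ) ^ ((L ++ [e]).getD i 0) * (((L ++ [e]).getD i 0 : ℕ) : ℤ)) =
      (∑ i ∈ Finset.range (k + 1),
        (2 : ℤ) ^ (L.getD i 0) * ((L.getD i 0 : ℕ) : ℤ)) + 2 ^ e * e := by
    rw [Finset.sum_range_succ, hgete]
    congr 1
    exact Finset.sum_congr rfl fun i hi => by
      rw [hgetlast i (Finset.mem_range.mp hi)]
  -- first sums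
  have hfst : (∑ i ∈ Finset.range (k + 1 + 1 - 1),
      ((2 : ℤ) ^ ((L ++ [e]).getD (i + 1) 0) +
        (2 : ℤ) ^ ((L ++ [e]).getD i 0) * (((k + 1 + 1 : ℕ) : ℤ) - (i + 1)))) =
      (∑ i ∈ Finset.range (k + 1 - 1),
        ((2 : ℤ) ^ (L.getD (i + 1) 0) +
          (2 : ℤ) ^ (L.getD i 0) * (((k + 1 : ℕ) : ℤ) - (i + 1)))) +
      (∑ i ∈ Finset.range k, (2 : ℤ) ^ (L.getD i 0)) + 2 ^ e +
        2 ^ (L.getD k 0) := by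
    have hred : (k + 1 + 1 - 1) = k + 1 := by omega
    rw [hred, Finset.sum_range_succ]
    have hlast : (2 : ℤ) ^ ((L ++ [e]).getD (k + 1) 0) +
        (2 : ℤ) ^ ((L ++ [e]).getD k 0) * (((k + 1 + 1 : ℕ) : ℤ) - (k + 1)) =
        2 ^ e + 2 ^ (L.getD k 0) := by
      rw [hgete, hgetlast k (by omega)]
      push_cast; ring
    rw [hlast]
    have hbody : (∑ i ∈ Finset.range k,
        ((2 : ℤ) ^ ((L ++ [e]).getD (i + 1) 0) +
          (2 : ℤ) ^ ((L ++ [e]).getD i 0) * (((k + 1 + 1 : ℕ) : ℤ) - (i + 1)))) =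
        (∑ i ∈ Finset.range k,
          ((2 : ℤ) ^ (L.getD (i + 1) 0) +
            (2 : ℤ) ^ (L.getD i 0) * (((k + 1 : ℕ) : ℤ) - (i + 1)))) +
        ∑ i ∈ Finset.range k, (2 : ℤ) ^ (L.getD i 0) := by
      rw [← Finset.sum_add_distrib]
      apply Finset.sum_congr rfl
      intro i hi
      have hi' := Finset.mem_range.mp hi
      rw [hgetlast (i + 1) (by omega), hgetlast i (by omega)]
      push_cast; ring
    rw [hbody]
    have hred2 : k + 1 - 1 = k := by omega
    rw [hred2]
    ring
  rw [hsnd, hfst]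
  have hpsplit : (∑ i ∈ Finset.range (k + 1), (2 : ℤ) ^ (L.getD i 0)) =
      (∑ i ∈ Finset.range k, (2 : ℤ) ^ (L.getD i 0)) + 2 ^ (L.getD k 0) :=
    Finset.sum_range_succ _ _
  rw [hpsplit]
  ring

lemma psum_expList : ∀ n : ℕ, psum (expList n) = n := by
  intro n
  induction n using Nat.strong_induction_on with
  | _ n ih =>
    rcases Nat.eq_zero_or_pos n with rfl | hn
    · rw [expList_zero]; rfl
    · obtain ⟨e, he⟩ : ∃ e, Nat.log 2 n = e := ⟨_, rfl⟩
      have h1 : 2 ^ e ≤ n := he ▸ Nat.pow_log_le_self 2 (by omega)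
      have hp : 0 < 2 ^ e := Nat.pow_pos (by norm_num)
      rw [expList_succ n hn, he, psum_append, ih _ (by omega)]
      have hc : ((n - 2 ^ e : ℕ) : ℤ) = (n : ℤ) - 2 ^ e := by
        push_cast [h1]; ring
      rw [hc]; push_cast; ring

lemma expList_ne_nil (n : ℕ) (hn : 1 ≤ n) : expList n ≠ [] := by
  intro h
  have := psum_expList n
  rw [h] at this
  simp [psum] at this
  omega

lemma beTree_zero : beTree 0 = leaf := by rw [beTree]

lemma F_singleton (e : ℕ) : F [e] = 2 ^ e * e := by
  simp [F]

lemma sackin_beTree_aux : ∀ n : ℕ, (sackin (beTree n) : ℤ) = F (expList n) := by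
  intro n
  induction n using Nat.strong_induction_on with
  | _ n ih =>
    rcases Nat.eq_zero_or_pos n with rfl | hn
    · rw [beTree_zero, expList_zero]
      simp [F, sackin]
    · by_cases hpow : ∃ e, n = 2 ^ e
      · obtain ⟨e, rfl⟩ := hpow
        rw [beTree_pow]
        have hlog : Nat.log 2 (2 ^ e) = e := Nat.log_pow (by norm_num) e
        have hsub : 2 ^ e - 2 ^ Nat.log 2 (2 ^ e) = 0 := by rw [hlog]; omega
        rw [expList_succ _ hn, hsub, expList_zero, hlog, List.nil_append]
        rw [sackin_fbTree, F_singleton]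
        push_cast; ring
      · obtain ⟨e, he⟩ : ∃ e, Nat.log 2 n = e := ⟨_, rfl⟩
        obtain ⟨m, hm⟩ : ∃ m, n - 2 ^ e = m := ⟨_, rfl⟩
        have h1 : 2 ^ e ≤ n := he ▸ Nat.pow_log_le_self 2 (by omega)
        have h2 : n < 2 ^ (e + 1) := he ▸ Nat.lt_pow_succ_log_self (by norm_num) n
        have hne : n ≠ 2 ^ e := fun h => hpow ⟨e, h⟩
        have hm1 : 1 ≤ m := by omega
        have hmlt : m < n := by
          have : 0 < 2 ^ e := Nat.pow_pos (by norm_num)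
          omega
        have hclog : Nat.clog 2 n = e + 1 := by
          have hle : Nat.clog 2 n ≤ e + 1 :=
            (Nat.clog_le_iff_le_pow (by norm_num)).mpr (by omega)
          have hgt : ¬ Nat.clog 2 n ≤ e := fun h => by
            have := (Nat.clog_le_iff_le_pow (b := 2) (by norm_num)).mp h
            omega
          omega
        have hn2 : 2 ≤ n := by
          rcases Nat.lt_or_ge n 2 with h | h
          · exfalso; interval_cases n; exact hpow ⟨0, by norm_num⟩
          · exact h
        rw [beTree_eq n hn2, hclog]
        simp only [Nat.add_sub_cancel]
        simp only [sackin, numLeaves_fbTree, sackin_fbTree]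
        rw [hm, numLeaves_beTree m hm1]
        rw [expList_succ n hn, he, hm]
        rw [F_append _ _ (expList_ne_nil m hm1), psum_expList]
        push_cast
        rw [ih m hmlt]
        ring

end BTree


open BTree in
/-- `S(T^be_n) = Σ_{i=1}^{w(n)-1} ( f_n(i+1) + f_n(i)·(w(n)-i) )
+ Σ_{i=1}^{w(n)} f_n(i)·log₂(f_n(i))`, where `log₂(f_n(i))` is the corresponding
exponent in the binary expansion of `n`. -/
theorem sackin_beTree (n : ℕ) (hn : 1 ≤ n) :
    (sackin (beTree n) : ℤ) =
      (∑ i ∈ Finset.range ((expList n).length - 1),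
        ((2 : ℤ) ^ ((expList n).getD (i + 1) 0) +
          (2 : ℤ) ^ ((expList n).getD i 0) *
            (((expList n).length : ℤ) - (i + 1)))) +
      ∑ i ∈ Finset.range (expList n).length,
        (2 : ℤ) ^ ((expList n).getD i 0) * ((expList n).getD i 0 : ℤ) := by
  rw [BTree.sackin_beTree_aux n]
  rfl
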